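/- arXiv:2303.03829 — 3 statements merged into one kernel-verified Lean document; each statement's English description precedes it below -/
import Mathlib

section
/- Simple State Override attack: Fix a target vector z ∈ ℝ^d. Suppose every Byzantine user b ∈ V_B sends to user i the vector x_b = x_i − (z + C) / W_B, where C = Σ_{j∈V_R} W_{ij} Clip(x_j − x_i, τ_i) and W_B = Σ_{b∈V_B} W_{ib} > 0. If ‖(z + C) / W_B‖ ≤ τ_i, then the aggregated update satisfies SCClip_i(x_1, …, x_n; τ_i) = x_i − z. -/
open Finset

/-- Norm clipping: `Clip z τ = min 1 (τ/‖z‖) • z` (with `Clip 0 τ = 0`).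
Note `Clip z τ = z` whenever `‖z‖ ≤ τ`. -/
noncomputable def Clip {d : ℕ} (z : EuclideanSpace ℝ (Fin d)) (τ : ℝ) :
    EuclideanSpace ℝ (Fin d) :=
  (min 1 (τ / ‖z‖)) • z

/-- Self-centered clipping aggregation of user `i` (own vector `xi`) over
the user set `V` with weights `W` and radius `τ`:
`SCClip_i(x₁,…,xₙ; τ) = ∑_{j∈V} W_{ij} (x_i + Clip(x_j − x_i, τ))`. -/
noncomputable def SCClip {ι : Type*} {d : ℕ} (V : Finset ι) (W : ι → ℝ)
    (xi : EuclideanSpace ℝ (Fin d)) (x : ι → EuclideanSpace ℝ (Fin d)) (τ : ℝ) :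
    EuclideanSpace ℝ (Fin d) :=
  ∑ j ∈ V, W j • (xi + Clip (x j - xi) τ)


lemma Clip_of_le {d : ℕ} {v : EuclideanSpace ℝ (Fin d)} {τ : ℝ} (h : ‖v‖ ≤ τ) :
    Clip v τ = v := by
  unfold Clip
  rcases eq_or_ne v 0 with rfl | hv
  · simp
  · have hn : 0 < ‖v‖ := norm_pos_iff.mpr hv
    have : (1:ℝ) ≤ τ / ‖v‖ := (one_le_div hn).mpr h
    rw [min_eq_left this, one_smul]

/-- Simple State Override attack: the aggregate is forced to `x_i − z`. -/
theorem simple_state_override {ι : Type*} [DecidableEq ι] {d : ℕ} (V VR : Finset ι) (hVR : VR ⊆ V)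
    (W : ι → ℝ) (hW0 : ∀ j ∈ V, 0 ≤ W j) (hW1 : ∑ j ∈ V, W j = 1)
    (i : ι) (hi : i ∈ VR) (τ : ℝ) (hτ : 0 ≤ τ)
    (x : ι → EuclideanSpace ℝ (Fin d)) (z : EuclideanSpace ℝ (Fin d))
    (C : EuclideanSpace ℝ (Fin d)) (hC : C = ∑ j ∈ VR, W j • Clip (x j - x i) τ)
    (WB : ℝ) (hWB : WB = ∑ b ∈ V \ VR, W b) (hWBpos : 0 < WB)
    (hsend : ∀ b ∈ V \ VR, x b = x i - WB⁻¹ • (z + C))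
    (hnoclipB : ‖WB⁻¹ • (z + C)‖ ≤ τ) :
    SCClip V W (x i) x τ = x i - z := by
  have hsplit : V = VR ∪ (V \ VR) := by
    rw [Finset.union_sdiff_of_subset hVR]
  have hdisj : Disjoint VR (V \ VR) := Finset.disjoint_sdiff
  unfold SCClip
  have hB : ∀ b ∈ V \ VR,
      W b • (x i + Clip (x b - x i) τ) = W b • (x i - WB⁻¹ • (z + C)) := by
    intro b hb
    have hx := hsend b hb
    have : x b - x i = -(WB⁻¹ • (z + C)) := by rw [hx]; abel
    rw [this, Clip_of_le (by rwa [norm_neg]), ← sub_eq_add_neg]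
  rw [hsplit, Finset.sum_union hdisj, Finset.sum_congr rfl hB]
  have h1 : ∑ j ∈ VR, W j • (x i + Clip (x j - x i) τ)
      = (∑ j ∈ VR, W j) • x i + C := by
    rw [hC, Finset.sum_smul, ← Finset.sum_add_distrib]
    exact Finset.sum_congr rfl fun j _ => smul_add _ _ _
  have h2 : ∑ b ∈ V \ VR, W b • (x i - WB⁻¹ • (z + C))
      = (∑ b ∈ V \ VR, W b) • x i - (z + C) := by
    rw [← Finset.sum_smul, ← hWB, smul_sub, smul_smul, mul_inv_cancel₀ hWBpos.ne', one_smul]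
  rw [h1, h2]
  have hWsum : (∑ j ∈ VR, W j) • x i + (WB • x i) = x i := by
    rw [← add_smul, hWB, ← Finset.sum_union hdisj, ← hsplit, hW1, one_smul]
  rw [hWB] at hWsum
  calc (∑ j ∈ VR, W j) • x i + C + ((∑ b ∈ V \ VR, W b) • x i - (z + C))
      = ((∑ j ∈ VR, W j) • x i + (∑ b ∈ V \ VR, W b) • x i) - z + (C - C) := by abel
    _ = x i - z := by rw [hWsum]; abel
end

section
/- Constant-τ attack (single-user identity): Fix η ∈ ℝ and a momentum vector m_i ∈ ℝ^d. Suppose every Byzantine user b ∈ V_B sends to user i the vector x_b = x_i − (C − η·m_i) / W_B, where C = Σ_{k∈V_R} W_{ik} Clip(x_k − x_i, τ_i) and W_B = Σ_{b∈V_B} W_{ib} > 0. If ‖(C − η·m_i) / W_B‖ ≤ τ_i, then the total clipped network contribution satisfies Σ_{j∈V} W_{ij} Clip(x_j − x_i, τ_i) = η·m_i, and consequently SCClip_i(x_1, …, x_n; τ_i) = x_i + η·m_i. -/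
open Finset

lemma Clip_of_norm_le {d : ℕ} (z : EuclideanSpace ℝ (Fin d)) (τ : ℝ)
    (h : ‖z‖ ≤ τ) : Clip z τ = z := by
  unfold Clip
  rcases eq_or_ne z 0 with rfl | hz
  · simp
  · rw [min_eq_left, one_smul]
    rw [le_div_iff₀ (norm_pos_iff.mpr hz), one_mul]
    exact h

/-- Constant-τ attack (single user): the total clipped network contribution
equals `η • m_i`, so the half-step update of user `i` is `x_i + η • m_i`. -/
theorem constant_tau_single {ι : Type*} [DecidableEq ι] {d : ℕ} (V VR : Finset ι) (hVR : VR ⊆ V)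
    (W : ι → ℝ) (hW0 : ∀ j ∈ V, 0 ≤ W j) (hW1 : ∑ j ∈ V, W j = 1)
    (i : ι) (hi : i ∈ VR) (τ : ℝ) (hτ : 0 ≤ τ)
    (η : ℝ) (m : EuclideanSpace ℝ (Fin d))
    (x : ι → EuclideanSpace ℝ (Fin d))
    (C : EuclideanSpace ℝ (Fin d)) (hC : C = ∑ k ∈ VR, W k • Clip (x k - x i) τ)
    (WB : ℝ) (hWB : WB = ∑ b ∈ V \ VR, W b) (hWBpos : 0 < WB)
    (hsend : ∀ b ∈ V \ VR, x b = x i - WB⁻¹ • (C - η • m))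
    (hnoclipB : ‖WB⁻¹ • (C - η • m)‖ ≤ τ) :
    (∑ j ∈ V, W j • Clip (x j - x i) τ) = η • m ∧
      SCClip V W (x i) x τ = x i + η • m := by
  have hB : ∑ b ∈ V \ VR, W b • Clip (x b - x i) τ = -(C - η • m) := by
    have : ∀ b ∈ V \ VR, W b • Clip (x b - x i) τ
        = W b • (-(WB⁻¹ • (C - η • m))) := by
      intro b hb
      rw [hsend b hb]
      have : x i - WB⁻¹ • (C - η • m) - x i = -(WB⁻¹ • (C - η • m)) := by
        abel
      rw [this, Clip_of_norm_le _ _ (by rwa [norm_neg])]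
    rw [Finset.sum_congr rfl this, ← Finset.sum_smul, ← hWB, smul_neg,
      smul_inv_smul₀ hWBpos.ne']
  have key : (∑ j ∈ V, W j • Clip (x j - x i) τ) = η • m := by
    rw [← Finset.sum_sdiff hVR, hB, ← hC]
    abel
  refine ⟨key, ?_⟩
  unfold SCClip
  have : ∀ j ∈ V, W j • (x i + Clip (x j - x i) τ)
      = W j • x i + W j • Clip (x j - x i) τ := fun j _ => smul_add _ _ _
  rw [Finset.sum_congr rfl this, Finset.sum_add_distrib, key, ← Finset.sum_smul,
    hW1, one_smul]
end

section
/- Increase attack: Suppose every Byzantine user b ∈ V_B sends to user i the vector x_b = x_i − (C − x_i) / W_B, where C = Σ_{j∈V_R} W_{ij} Clip(x_j − x_i, τ_i) and W_B = Σ_{b∈V_B} W_{ib} > 0. If ‖(C − x_i) / W_B‖ ≤ τ_i, then the aggregated update satisfies SCClip_i(x_1, …, x_n; τ_i) = 2·x_i. -/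
open Finset

lemma clip_eq_self {d : ℕ} {z : EuclideanSpace ℝ (Fin d)} {τ : ℝ} (h : ‖z‖ ≤ τ) :
    Clip z τ = z := by
  unfold Clip
  rcases eq_or_ne z 0 with rfl | hz
  · simp
  · rw [min_eq_left, one_smul]
    rw [le_div_iff₀ (norm_pos_iff.mpr hz)]
    simpa using h

/-- Increase attack: the aggregate is forced to `2 • x_i`. -/
theorem increase_attack {ι : Type*} [DecidableEq ι] {d : ℕ} (V VR : Finset ι) (hVR : VR ⊆ V)
    (W : ι → ℝ) (hW0 : ∀ j ∈ V, 0 ≤ W j) (hW1 : ∑ j ∈ V, W j = 1)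
    (i : ι) (hi : i ∈ VR) (τ : ℝ) (hτ : 0 ≤ τ)
    (x : ι → EuclideanSpace ℝ (Fin d))
    (C : EuclideanSpace ℝ (Fin d)) (hC : C = ∑ j ∈ VR, W j • Clip (x j - x i) τ)
    (WB : ℝ) (hWB : WB = ∑ b ∈ V \ VR, W b) (hWBpos : 0 < WB)
    (hsend : ∀ b ∈ V \ VR, x b = x i - WB⁻¹ • (C - x i))
    (hnoclipB : ‖WB⁻¹ • (C - x i)‖ ≤ τ) :
    SCClip V W (x i) x τ = (2 : ℝ) • x i := by
  have key : ∀ b ∈ V \ VR, Clip (x b - x i) τ = -(WB⁻¹ • (C - x i)) := by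
    intro b hb
    rw [hsend b hb]
    have h1 : x i - WB⁻¹ • (C - x i) - x i = -(WB⁻¹ • (C - x i)) := by abel
    rw [h1, clip_eq_self (by rwa [norm_neg])]
  have hB : ∑ b ∈ V \ VR, W b • Clip (x b - x i) τ = -(C - x i) := by
    rw [Finset.sum_congr rfl (fun b hb => by rw [key b hb])]
    rw [← Finset.sum_smul, ← hWB, smul_neg, smul_smul,
      mul_inv_cancel₀ hWBpos.ne', one_smul]
  unfold SCClip
  calc ∑ j ∈ V, W j • (x i + Clip (x j - x i) τ)
      = (∑ j ∈ V, W j) • x i + ∑ j ∈ V, W j • Clip (x j - x i) τ := by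
        rw [Finset.sum_smul, ← Finset.sum_add_distrib]
        exact Finset.sum_congr rfl (fun j _ => smul_add _ _ _)
    _ = x i + (∑ j ∈ VR, W j • Clip (x j - x i) τ
          + ∑ j ∈ V \ VR, W j • Clip (x j - x i) τ) := by
        rw [hW1, one_smul, ← Finset.sum_union Finset.disjoint_sdiff,
          Finset.union_sdiff_of_subset hVR]
    _ = x i + (C + -(C - x i)) := by rw [← hC, hB]
    _ = (2 : ℝ) • x i := by rw [two_smul]; abel
end
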